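/- Let n ≥ 1 with n ≡ 1 (mod 4), let Θ̂ be a real number with (n−2)·π/2 < Θ̂ < n·π/2, and let μ₁, …, μ_{n−1} be real numbers with Σ_{k=1}^{n−1} arctan(μ_k) > Θ̂ − π/2. Then the complex number z := ∏_{k=1}^{n−1} (1 + i·μ_k) satisfies tan(Θ̂)·Im(z) + Re(z) > 0. -/

import Mathlib

/-!
Each factor is `1 + i μ = √(1 + μ²) · e^{i arctan μ}`, so `z = R e^{iS}` with `R > 0` and
`S = Σ arctan μ_k`, and `tan Θ̂ · Im z + Re z = R cos (Θ̂ - S) / cos Θ̂`. Since each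
`arctan μ_k < π/2`, the hypothesis puts `Θ̂ - S` in `(-π/2, π/2)`, while `n ≡ 1 (mod 4)` puts
`Θ̂` within `π/2` of a multiple of `2π`; both cosines are therefore positive.
-/

open Real Finset

namespace Complex

theorem one_add_I_mul_ofReal_eq (x : ℝ) :
    1 + I * x = (√(1 + x ^ 2) : ℝ) * exp ((Real.arctan x : ℝ) * I) := by
  have hs : √(1 + x ^ 2) ≠ 0 := by positivity
  rw [exp_mul_I, ← ofReal_cos, ← ofReal_sin, Real.cos_arctan, Real.sin_arctan, mul_add,
    ← mul_assoc, ← ofReal_mul, ← ofReal_mul, mul_one_div_cancel hs, mul_div_cancel₀ _ hs]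
  push_cast
  ring

theorem prod_one_add_I_mul_ofReal_eq {ι : Type*} (s : Finset ι) (μ : ι → ℝ) :
    ∏ k ∈ s, (1 + I * μ k) =
      ((∏ k ∈ s, √(1 + μ k ^ 2) : ℝ) : ℂ) * exp ((∑ k ∈ s, Real.arctan (μ k) : ℝ) * I) := by
  simp_rw [one_add_I_mul_ofReal_eq, prod_mul_distrib, ← exp_sum]
  push_cast
  rw [sum_mul]

theorem tan_mul_im_add_re_ofReal_mul_exp {r s θ : ℝ} (hθ : Real.cos θ ≠ 0) :
    Real.tan θ * ((r : ℂ) * exp (s * I)).im + ((r : ℂ) * exp (s * I)).re =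
      r * Real.cos (θ - s) / Real.cos θ := by
  rw [re_ofReal_mul, im_ofReal_mul, exp_ofReal_mul_I_re, exp_ofReal_mul_I_im,
    Real.tan_eq_sin_div_cos, Real.cos_sub]
  field_simp
  ring

end Complex

theorem Real.sum_arctan_le {ι : Type*} [Fintype ι] (μ : ι → ℝ) :
    ∑ k, arctan (μ k) ≤ Fintype.card ι * (π / 2) := by
  simpa using sum_le_sum fun k (_ : k ∈ univ) => (arctan_lt_pi_div_two (μ k)).le

theorem Real.cos_pos_of_mod_four_eq_one {n : ℕ} (hmod : n % 4 = 1) {θ : ℝ}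
    (h1 : ((n : ℝ) - 2) * (π / 2) < θ) (h2 : θ < (n : ℝ) * (π / 2)) : 0 < cos θ := by
  obtain ⟨m, rfl⟩ : ∃ m : ℕ, n = 4 * m + 1 := ⟨n / 4, by omega⟩
  rw [← cos_sub_int_mul_two_pi θ m]
  push_cast at h1 h2 ⊢
  exact cos_pos_of_mem_Ioo ⟨by linarith, by linarith⟩

theorem stmt_14 (n : ℕ) (hmod : n % 4 = 1) (Θhat : ℝ)
    (h1 : ((n : ℝ) - 2) * (π / 2) < Θhat) (h2 : Θhat < (n : ℝ) * (π / 2))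
    (μ : Fin (n - 1) → ℝ)
    (hμ : Θhat - π / 2 < ∑ k, Real.arctan (μ k)) :
    0 < Real.tan Θhat * (∏ k, (1 + Complex.I * (μ k : ℂ))).im +
        (∏ k, (1 + Complex.I * (μ k : ℂ))).re := by
  have hcos : 0 < cos Θhat := cos_pos_of_mod_four_eq_one hmod h1 h2
  have hsum : ∑ k, arctan (μ k) ≤ ((n : ℝ) - 1) * (π / 2) := by
    simpa [Nat.cast_sub (by omega : 1 ≤ n)] using sum_arctan_le μ
  have hR : 0 < ∏ k, √(1 + μ k ^ 2) := prod_pos fun k _ => by positivity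
  rw [Complex.prod_one_add_I_mul_ofReal_eq, Complex.tan_mul_im_add_re_ofReal_mul_exp hcos.ne']
  exact div_pos (mul_pos hR (cos_pos_of_mem_Ioo ⟨by linarith, by linarith⟩)) hcos
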